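/- arXiv:1005.4617 — 5 statements merged into one kernel-verified Lean document; each statement's English description precedes it below -/
import Mathlib

section
/- Let (A, ·) be an associative R-algebra and D : A → A an R-linear map satisfying D(a·D(b)) = D(a)·D(b) = D(D(a)·b) for all a, b ∈ A. Then the bracket [a,b] := D(a)·b − b·D(a) is R-bilinear and satisfies the left Leibniz identity [a,[b,c]] = [[a,b],c] + [b,[a,c]], so (A, [·,·]) is a left Loday algebra. -/
/-- If `D` is an `R`-linear map on an associative `R`-algebra `A` with
`D(a·D(b)) = D(a)·D(b) = D(D(a)·b)`, then `[a,b] := D(a)·b − b·D(a)` is an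
`R`-bilinear left Loday bracket. -/
theorem bracket_from_D_is_left_loday
    {R A : Type*} [CommRing R] [Ring A] [Algebra R A]
    (D : A →ₗ[R] A)
    (hD : ∀ a b : A, D (a * D b) = D a * D b ∧ D a * D b = D (D a * b))
    (br : A → A → A) (hbr : ∀ a b : A, br a b = D a * b - b * D a) :
    (∀ a b c : A, br (a + b) c = br a c + br b c) ∧
    (∀ (r : R) (a b : A), br (r • a) b = r • br a b) ∧
    (∀ a b c : A, br a (b + c) = br a b + br a c) ∧
    (∀ (r : R) (a b : A), br a (r • b) = r • br a b) ∧
    (∀ a b c : A, br a (br b c) = br (br a b) c + br b (br a c)) := by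
  have hbrD : ∀ a b : A, D (br a b) = D a * D b - D b * D a := by
    intro a b
    rw [hbr, map_sub, ← (hD a b).2, (hD b a).1]
  refine ⟨?_, ?_, ?_, ?_, ?_⟩
  · intro a b c; simp only [hbr, map_add, add_mul, mul_add]; abel
  · intro r a b; simp only [hbr, map_smul, smul_mul_assoc, mul_smul_comm, smul_sub]
  · intro a b c; simp only [hbr, add_mul, mul_add]; abel
  · intro r a b; simp only [hbr, smul_mul_assoc, mul_smul_comm, smul_sub]
  · intro a b c
    have hbrD' : ∀ a b : A, D (D a * b - b * D a) = D a * D b - D b * D a := by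
      intro a b; rw [← hbr, hbrD]
    simp only [hbr, hbrD']
    noncomm_ring
end

section
/- Let A be an associative R-algebra and D : A → A a derivation with D² = 0. Then D satisfies D(a·D(b)) = D(a)·D(b) for all a, b ∈ A, and consequently [a,b] := D(a)·b − b·D(a) defines a left Loday algebra structure on A. -/
/-- A square-zero derivation `D` satisfies `D(a·D(b)) = D(a)·D(b)`, and the
bracket `[a,b] := D(a)·b − b·D(a)` satisfies the left Leibniz identity. -/
theorem square_zero_derivation_gives_left_loday
    {R A : Type*} [CommRing R] [Ring A] [Algebra R A]
    (D : A →ₗ[R] A)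
    (hder : ∀ a b : A, D (a * b) = D a * b + a * D b)
    (hsq : ∀ a : A, D (D a) = 0)
    (br : A → A → A) (hbr : ∀ a b : A, br a b = D a * b - b * D a) :
    (∀ a b : A, D (a * D b) = D a * D b) ∧
    (∀ a b c : A, br a (br b c) = br (br a b) c + br b (br a c)) := by
  have h1 : ∀ a b : A, D (a * D b) = D a * D b := by
    intro a b
    rw [hder, hsq, mul_zero, add_zero]
  refine ⟨h1, fun a b c => ?_⟩
  simp only [hbr, map_sub, h1, hder, hsq, zero_mul, zero_add]
  noncomm_ring
end

section
/- Let A be an associative R-algebra and D : A → A an algebra morphism with D² = D. Then D satisfies D(a·D(b)) = D(a)·D(b) and D(D(a)·b) = D(a)·D(b) for all a, b ∈ A, and consequently [a,b] := D(a)·b − b·D(a) defines a left Loday algebra structure on A. -/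
/-- An idempotent algebra morphism `D` satisfies `D(a·D(b)) = D(a)·D(b)` and
`D(D(a)·b) = D(a)·D(b)`, and the bracket `[a,b] := D(a)·b − b·D(a)` satisfies
the left Leibniz identity. -/
theorem projector_gives_left_loday
    {R A : Type*} [CommRing R] [Ring A] [Algebra R A]
    (D : A →ₗ[R] A)
    (halg : ∀ a b : A, D (a * b) = D a * D b)
    (hproj : ∀ a : A, D (D a) = D a)
    (br : A → A → A) (hbr : ∀ a b : A, br a b = D a * b - b * D a) :
    (∀ a b : A, D (a * D b) = D a * D b) ∧
    (∀ a b : A, D (D a * b) = D a * D b) ∧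
    (∀ a b c : A, br a (br b c) = br (br a b) c + br b (br a c)) := by
  refine ⟨fun a b => by rw [halg, hproj], fun a b => by rw [halg, hproj], fun a b c => ?_⟩
  simp only [hbr, map_sub, halg, hproj]
  noncomm_ring
end

section
/- Let B : F × F → F be R-bilinear and antisymmetric (B(X,Y) = −B(Y,X)). Then the graph F_B = {(ad^L_X, X) : X ∈ F} is closed under the omni-Loday bracket if and only if (F, B) is a Lie algebra (i.e. B satisfies the Jacobi identity). -/
/-- For an antisymmetric bilinear `B`, the graph `F_B` is closed under the
omni-Loday bracket if and only if `(F, B)` is a Lie algebra. -/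
theorem graph_closed_iff_lie_of_antisymm
    {R F : Type*} [CommRing R] [AddCommGroup F] [Module R F]
    (B : F →ₗ[R] F →ₗ[R] F)
    (hanti : ∀ X Y : F, B X Y = - B Y X) :
    (∀ X Y : F, ∃ W : F,
        ((B X ∘ₗ B Y - B Y ∘ₗ B X : F →ₗ[R] F), B X Y) = (B W, W)) ↔
    (∀ X Y Z : F, B X (B Y Z) + B Z (B X Y) + B Y (B Z X) = 0) := by
  constructor
  · intro h X Y Z
    obtain ⟨W, hW⟩ := h X Y
    have h1 : (B X ∘ₗ B Y - B Y ∘ₗ B X : F →ₗ[R] F) = B W := congrArg Prod.fst hW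
    have h2 : B X Y = W := congrArg Prod.snd hW
    subst h2
    have := congrArg (fun f => f Z) h1
    simp only [LinearMap.sub_apply, LinearMap.comp_apply] at this
    have hz : B Z (B X Y) = - B (B X Y) Z := hanti _ _
    have hy : B Y (B Z X) = - B Y (B X Z) := by rw [hanti Z X, map_neg]
    rw [hz, hy, ← this]
    abel
  · intro h X Y
    refine ⟨B X Y, Prod.ext (LinearMap.ext fun Z => ?_) rfl⟩
    simp only [LinearMap.sub_apply, LinearMap.comp_apply]
    have := h X Y Z
    have hz : B Z (B X Y) = - B (B X Y) Z := hanti _ _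
    have hy : B Y (B Z X) = - B Y (B X Z) := by rw [hanti Z X, map_neg]
    rw [hz, hy] at this
    linear_combination (norm := abel) this
end

section
/- Let (F, [[·,·]]) be a left Loday quasi-algebroid over the commutative algebra A, i.e. each ad^L_X = [[X,·]] is a quasi-derivation of F, with anchor q^L(X) := (ad^L_X)^ (the symbol of ad^L_X). Then q^L : (F, [[·,·]]) → (Der_R(A), [·,·]) is a morphism of left Loday algebras: q^L([[X,Y]]) = [q^L(X), q^L(Y)] for all X, Y ∈ F. -/
/-- The anchor of a left Loday quasi-algebroid is a morphism of left Loday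
algebras into the derivations of `A` with the commutator bracket. -/
theorem anchor_is_loday_morphism
    {R A F : Type*} [CommRing R] [CommRing A] [Algebra R A]
    [AddCommGroup F] [Module R F] [Module A F] [IsScalarTower R A F]
    [FaithfulSMul A F]
    (b : F →ₗ[R] F →ₗ[R] F)
    (hleib : ∀ X Y Z : F, b X (b Y Z) = b (b X Y) Z + b Y (b X Z))
    (q : F → Derivation R A A)
    (hq : ∀ (X : F) (f : A) (Z : F), b X (f • Z) - f • b X Z = q X f • Z) :
    ∀ (X Y : F) (f : A), q (b X Y) f = q X (q Y f) - q Y (q X f) := by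
  intro X Y f
  refine eq_of_smul_eq_smul (α := F) fun Z => ?_
  have E2 : b Y (f • Z) = f • b Y Z + q Y f • Z := by
    have := hq Y f Z; linear_combination (norm := abel) this
  have E1 : b X (f • Z) = f • b X Z + q X f • Z := by
    have := hq X f Z; linear_combination (norm := abel) this
  have E3 : b X (q Y f • Z) = q Y f • b X Z + q X (q Y f) • Z := by
    have := hq X (q Y f) Z; linear_combination (norm := abel) this
  have E4 : b Y (q X f • Z) = q X f • b Y Z + q Y (q X f) • Z := by
    have := hq Y (q X f) Z; linear_combination (norm := abel) this
  have E5 : b X (f • b Y Z) = f • b X (b Y Z) + q X f • b Y Z := by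
    have := hq X f (b Y Z); linear_combination (norm := abel) this
  have E6 : b Y (f • b X Z) = f • b Y (b X Z) + q Y f • b X Z := by
    have := hq Y f (b X Z); linear_combination (norm := abel) this
  have E7 : b (b X Y) (f • Z) - f • b (b X Y) Z = q (b X Y) f • Z := hq (b X Y) f Z
  have L1 : b X (b Y (f • Z)) = b (b X Y) (f • Z) + b Y (b X (f • Z)) := hleib X Y (f • Z)
  have L2 : b X (b Y Z) = b (b X Y) Z + b Y (b X Z) := hleib X Y Z
  rw [E2, map_add, E5, E3] at L1
  rw [E1, map_add, E6, E4] at L1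
  rw [sub_smul]
  have hsmul : f • b (b X Y) Z = f • b X (b Y Z) - f • b Y (b X Z) := by
    rw [← smul_sub]; congr 1; rw [L2]; abel
  linear_combination (norm := abel) -E7 - L1 - hsmul
end
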